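/- arXiv:2111.08422 — 3 statements merged into one kernel-verified Lean document; each statement's English description precedes it below -/
import Mathlib

section
/- Let μ be a finite positive Borel measure on a space X, let G : X → (-∞, 0] be a measurable function, and let λ > 1. Define ‖F‖_t² := ∫_X e^{-λ·max(G(x)-t, 0)} dμ(x) for t ∈ ℝ. Then limsup_{t → -∞} e^{-t}·‖F‖_t² ≤ (λ/(λ-1)) · limsup_{s → -∞} e^{-s}·μ({x : G(x) < s}). -/
/-!
Writing `exp (-λ max (G x - t) 0) = ∫_{u > max (G x - t) 0} λ e^{-λu} du` and applying Tonelli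
turns `e^{-t} ‖F‖_t²` into `∫_{u > 0} λ e^{-(λ-1)u} · e^{-(t+u)} μ {G < t + u} du`. Where
`t + u ≤ T` the second factor is at most `sup_{s ≤ T} e^{-s} μ {G < s}`, which contributes
`λ/(λ-1)` times that supremum; the range `t + u > T` contributes at most `μ X · e^{(λ-1)t - λT}`,
which vanishes as `t → -∞`. Letting `T → -∞` gives the limsup.
-/

open Real MeasureTheory Filter Set Topology

lemma lintegral_Ioi_ofReal_mul_exp_neg_mul {a b : ℝ} (ha : 0 < a) (hb : 0 ≤ b) (c : ℝ) :
    ∫⁻ u in Ioi c, ENNReal.ofReal (b * exp (-(a * u)))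
      = ENNReal.ofReal (b / a * exp (-(a * c))) := by
  have hint : IntegrableOn (fun u ↦ b * exp (-(a * u))) (Ioi c) := by
    have h := (integrableOn_exp_mul_Ioi (neg_neg_of_pos ha) c).const_mul b
    simp only [neg_mul] at h
    exact h
  have hval : ∫ u in Ioi c, b * exp (-(a * u)) = b / a * exp (-(a * c)) := by
    rw [integral_const_mul]
    simp only [← neg_mul, integral_exp_mul_Ioi (neg_neg_of_pos ha) c]
    field_simp
  rw [← hval, ofReal_integral_eq_lintegral_ofReal hint (ae_of_all _ fun u ↦ by positivity)]

section

variable {X : Type*} [MeasurableSpace X] {μ : Measure X}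

lemma lintegral_ofReal_exp_neg_mul_max_eq [SFinite μ] {f : X → ℝ} (hf : Measurable f)
    {a : ℝ} (ha : 0 < a) :
    ∫⁻ x, ENNReal.ofReal (exp (-(a * max (f x) 0))) ∂μ
      = ∫⁻ u in Ioi 0, ENNReal.ofReal (a * exp (-(a * u))) * μ {x | f x < u} := by
  set g : ℝ → ENNReal := fun u ↦ ENNReal.ofReal (a * exp (-(a * u)))
  have hg : Measurable g := by fun_prop
  have h_fiber : ∀ x, ENNReal.ofReal (exp (-(a * max (f x) 0)))
      = ∫⁻ u in Ioi 0, (Ioi (f x)).indicator g u := by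
    intro x
    rw [lintegral_indicator measurableSet_Ioi, Measure.restrict_restrict measurableSet_Ioi,
      Ioi_inter_Ioi, lintegral_Ioi_ofReal_mul_exp_neg_mul ha ha.le, div_self ha.ne', one_mul]
  have h_meas : AEMeasurable (Function.uncurry fun x u ↦ (Ioi (f x)).indicator g u)
      (μ.prod (volume.restrict (Ioi 0))) := by
    have hS : MeasurableSet {p : X × ℝ | f p.1 < p.2} :=
      measurableSet_lt (hf.comp measurable_fst) measurable_snd
    exact ((hg.comp measurable_snd).indicator hS).aemeasurable
  simp_rw [h_fiber]
  rw [lintegral_lintegral_swap h_meas]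
  refine setLIntegral_congr_fun measurableSet_Ioi fun u _ ↦ ?_
  have h_ind : ∀ x, (Ioi (f x)).indicator g u = {x | f x < u}.indicator (fun _ ↦ g u) x := by
    intro x
    simp only [indicator_apply, mem_Ioi]
    rfl
  simp_rw [h_ind]
  exact lintegral_indicator_const (measurableSet_lt hf measurable_const) _

lemma ofReal_exp_neg_mul_measure_lt_add_le {G : X → ℝ} {lam : ℝ} (hlam : 0 ≤ lam)
    {L : ENNReal} {T t u : ℝ} (hT : ∀ s ≤ T, ENNReal.ofReal (exp (-s)) * μ {x | G x < s} ≤ L)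
    (htu : t + u ≤ T) :
    ENNReal.ofReal (exp (-t)) * (ENNReal.ofReal (lam * exp (-(lam * u))) * μ {x | G x < t + u})
      ≤ ENNReal.ofReal (lam * exp (-((lam - 1) * u))) * L := by
  have h_exp : exp (-t) * (lam * exp (-(lam * u)))
      = lam * exp (-((lam - 1) * u)) * exp (-(t + u)) := by
    rw [mul_left_comm, mul_assoc, ← exp_add, ← exp_add]
    ring_nf
  rw [← mul_assoc, ← ENNReal.ofReal_mul (by positivity), h_exp,
    ENNReal.ofReal_mul (by positivity), mul_assoc]
  gcongr
  exact hT _ htu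

lemma ofReal_exp_neg_mul_lintegral_le [IsFiniteMeasure μ] {G : X → ℝ} (hG : Measurable G)
    {lam : ℝ} (hlam : 1 < lam) {L : ENNReal} {T t : ℝ}
    (hT : ∀ s ≤ T, ENNReal.ofReal (exp (-s)) * μ {x | G x < s} ≤ L) (ht : t ≤ T) :
    ENNReal.ofReal (exp (-t)) * ∫⁻ x, ENNReal.ofReal (exp (-(lam * max (G x - t) 0))) ∂μ
      ≤ ENNReal.ofReal (lam / (lam - 1)) * L
        + ENNReal.ofReal (exp ((lam - 1) * t - lam * T)) * μ univ := by
  have hlam0 : 0 < lam := by linarith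
  have hlam1 : 0 < lam - 1 := by linarith
  set h : ℝ → ENNReal := fun u ↦ ENNReal.ofReal (exp (-t)) *
    (ENNReal.ofReal (lam * exp (-(lam * u))) * μ {x | G x < t + u})
  have h_eq : ENNReal.ofReal (exp (-t)) *
      ∫⁻ x, ENNReal.ofReal (exp (-(lam * max (G x - t) 0))) ∂μ = ∫⁻ u in Ioi 0, h u := by
    rw [lintegral_ofReal_exp_neg_mul_max_eq (hG.sub_const t) hlam0,
      ← lintegral_const_mul' _ _ ENNReal.ofReal_ne_top]
    simp_rw [sub_lt_iff_lt_add', h]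
  have h_near : ∀ u ∈ Ioc 0 (T - t),
      h u ≤ ENNReal.ofReal (lam * exp (-((lam - 1) * u))) * L :=
    fun u hu ↦ ofReal_exp_neg_mul_measure_lt_add_le hlam0.le hT (by linarith [hu.2])
  have h_far : ∀ u, h u ≤ ENNReal.ofReal (exp (-t)) *
      (ENNReal.ofReal (lam * exp (-(lam * u))) * μ univ) := fun u ↦ by
    simp only [h]
    gcongr
    exact subset_univ _
  have h_far_int : ∫⁻ u in Ioi (T - t), ENNReal.ofReal (exp (-t)) *
      (ENNReal.ofReal (lam * exp (-(lam * u))) * μ univ)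
      = ENNReal.ofReal (exp ((lam - 1) * t - lam * T)) * μ univ := by
    rw [lintegral_const_mul' _ _ ENNReal.ofReal_ne_top,
      lintegral_mul_const' _ _ (measure_ne_top μ univ),
      lintegral_Ioi_ofReal_mul_exp_neg_mul hlam0 hlam0.le, div_self hlam0.ne', one_mul,
      ← mul_assoc, ← ENNReal.ofReal_mul (by positivity), ← exp_add]
    ring_nf
  calc ENNReal.ofReal (exp (-t)) *
        ∫⁻ x, ENNReal.ofReal (exp (-(lam * max (G x - t) 0))) ∂μ
      = ∫⁻ u in Ioi 0, h u := h_eq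
    _ ≤ (∫⁻ u in Ioc 0 (T - t), h u) + ∫⁻ u in Ioi (T - t), h u := by
      rw [← Ioc_union_Ioi_eq_Ioi (sub_nonneg.mpr ht)]
      exact lintegral_union_le _ _ _
    _ ≤ (∫⁻ u in Ioi 0, ENNReal.ofReal (lam * exp (-((lam - 1) * u))) * L)
        + ∫⁻ u in Ioi (T - t), ENNReal.ofReal (exp (-t)) *
          (ENNReal.ofReal (lam * exp (-(lam * u))) * μ univ) := by
      gcongr ?_ + ?_
      · exact (setLIntegral_mono' measurableSet_Ioc h_near).trans
          (lintegral_mono_set Ioc_subset_Ioi_self)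
      · exact lintegral_mono h_far
    _ = _ := by
      rw [lintegral_mul_const _ (by fun_prop),
        lintegral_Ioi_ofReal_mul_exp_neg_mul hlam1 hlam0.le, h_far_int]
      simp

end

theorem stmt2_general {X : Type*} [MeasurableSpace X] (μ : Measure X) [IsFiniteMeasure μ]
    (G : X → ℝ) (hG : Measurable G)
    (lam : ℝ) (hlam : 1 < lam) :
    Filter.limsup
        (fun t : ℝ => ENNReal.ofReal (Real.exp (-t)) *
          ∫⁻ x, ENNReal.ofReal (Real.exp (-(lam * max (G x - t) 0))) ∂μ)
        Filter.atBot
      ≤ ENNReal.ofReal (lam / (lam - 1)) *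
        Filter.limsup
          (fun s : ℝ => ENNReal.ofReal (Real.exp (-s)) * μ {x | G x < s})
          Filter.atBot := by
  set C := ENNReal.ofReal (lam / (lam - 1))
  set φ := fun s : ℝ ↦ ENNReal.ofReal (exp (-s)) * μ {x | G x < s}
  have h_tail (T : ℝ) :
      Tendsto (fun t ↦ ENNReal.ofReal (exp ((lam - 1) * t - lam * T)) * μ univ) atBot (𝓝 0) := by
    have h_arg : Tendsto (fun t ↦ (lam - 1) * t - lam * T) atBot atBot :=
      tendsto_atBot_add_const_right _ _ (tendsto_id.const_mul_atBot (by linarith))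
    simpa using ENNReal.Tendsto.mul_const (ENNReal.tendsto_ofReal (tendsto_exp_atBot.comp h_arg))
      (Or.inr (measure_ne_top μ univ))
  have h_bound (T : ℝ) : limsup (fun t : ℝ ↦ ENNReal.ofReal (exp (-t)) *
      ∫⁻ x, ENNReal.ofReal (exp (-(lam * max (G x - t) 0))) ∂μ) atBot
      ≤ C * ⨆ s ∈ Iic T, φ s := by
    calc _ ≤ limsup (fun t ↦ C * (⨆ s ∈ Iic T, φ s)
          + ENNReal.ofReal (exp ((lam - 1) * t - lam * T)) * μ univ) atBot := by
          refine limsup_le_limsup ?_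
          filter_upwards [eventually_le_atBot T] with t ht
          exact ofReal_exp_neg_mul_lintegral_le hG hlam (fun s hs ↦ le_biSup φ hs) ht
      _ = C * ⨆ s ∈ Iic T, φ s := by
          simpa using (tendsto_const_nhds.add (h_tail T)).limsup_eq
  calc _ ≤ ⨅ T : ℝ, C * ⨆ s ∈ Iic T, φ s := le_iInf h_bound
    _ = C * ⨅ T : ℝ, ⨆ s ∈ Iic T, φ s :=
        (ENNReal.mul_iInf fun hC ↦ absurd hC ENNReal.ofReal_ne_top).symm
    _ = C * limsup φ atBot := by rw [atBot_basis.limsup_eq_iInf_iSup]; simp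

theorem stmt2 {X : Type*} [MeasurableSpace X] (μ : Measure X) [IsFiniteMeasure μ]
    (G : X → ℝ) (hG : Measurable G) (hG0 : ∀ x, G x ≤ 0)
    (lam : ℝ) (hlam : 1 < lam) :
    Filter.limsup
        (fun t : ℝ => ENNReal.ofReal (Real.exp (-t)) *
          ∫⁻ x, ENNReal.ofReal (Real.exp (-(lam * max (G x - t) 0))) ∂μ)
        Filter.atBot
      ≤ ENNReal.ofReal (lam / (lam - 1)) *
        Filter.limsup
          (fun s : ℝ => ENNReal.ofReal (Real.exp (-s)) * μ {x | G x < s})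
          Filter.atBot :=
  stmt2_general μ G hG lam hlam
end

section
/- Let g : ℝ → ℝ be a convex function, and α ≥ 0. Suppose that for every ε > 0 there exists a constant C(ε) such that g(0) ≥ (α+ε)·t + g(t) - log C(ε) for all t < 0. Then the function t ↦ α·t + g(t) is monotonically increasing on ℝ. -/
theorem stmt3 (g : ℝ → ℝ) (hg : ConvexOn ℝ Set.univ g) (α : ℝ) (hα : 0 ≤ α)
    (h : ∀ ε > (0 : ℝ), ∃ C > (0 : ℝ), ∀ t < (0 : ℝ),
      g 0 ≥ (α + ε) * t + g t - Real.log C) :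
    Monotone (fun t => α * t + g t) := by
  intro a b hab
  rcases eq_or_lt_of_le hab with rfl | hab
  · exact le_rfl
  simp only
  by_contra hcon
  push_neg at hcon
  set s : ℝ := (g b - g a) / (b - a) with hs
  have hba : (0:ℝ) < b - a := by linarith
  have hslt : s < -α := by
    rw [hs, div_lt_iff₀ hba]
    nlinarith
  set ε : ℝ := (-α - s) / 2 with hε
  have hεpos : (0:ℝ) < ε := by rw [hε]; linarith
  obtain ⟨C, hC, hCh⟩ := h ε hεpos
  set t₀ : ℝ := min (min a 0 - 1) ((g a - g 0 - s * a - Real.log C) / ε - 1) with ht₀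
  have ht0a : t₀ < a := by
    have : t₀ ≤ min a 0 - 1 := min_le_left _ _
    have : min a 0 ≤ a := min_le_left _ _
    calc t₀ ≤ min a 0 - 1 := min_le_left _ _
      _ < a := by linarith [min_le_left a 0]
  have ht0neg : t₀ < 0 := by
    calc t₀ ≤ min a 0 - 1 := min_le_left _ _
      _ < 0 := by linarith [min_le_right a 0]
  have hbig : t₀ ≤ (g a - g 0 - s * a - Real.log C) / ε - 1 := min_le_right _ _
  -- convexity: g t₀ ≥ g a + s * (t₀ - a)
  have hslope := hg.slope_mono_adjacent (Set.mem_univ t₀) (Set.mem_univ b) ht0a hab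
  rw [show (g a - g t₀) / (a - t₀) ≤ (g b - g a) / (b - a) ↔
      (g a - g t₀) / (a - t₀) ≤ s from by rw [hs]] at hslope
  have hat0 : (0:ℝ) < a - t₀ := by linarith
  have hgt0 : g t₀ ≥ g a + s * (t₀ - a) := by
    rw [div_le_iff₀ hat0] at hslope
    nlinarith
  have hkey := hCh t₀ ht0neg
  have hsum : α + ε + s = -ε := by rw [hε]; ring
  have hfinal : g 0 ≥ -ε * t₀ + g a - s * a - Real.log C := by nlinarith
  have hmul : ε * t₀ ≤ (g a - g 0 - s * a - Real.log C) - ε := by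
    have h2 := mul_le_mul_of_nonneg_left hbig (le_of_lt hεpos)
    rw [mul_sub, mul_div_cancel₀ _ (ne_of_gt hεpos)] at h2
    linarith
  nlinarith [hfinal, hmul, hεpos]
end

section
/- Let h : ℝ → ℝ be convex and α ≥ 0. Suppose for every ε > 0 there is C(ε) > 0 with (α+ε)t + h(t) ≤ h(0) + log C(ε) for all t < 0. Then h(t) + αt ≤ h(s) + αs whenever t ≤ s, i.e. t ↦ h(t) + αt is nondecreasing on ℝ. -/
theorem stmt13 (h : ℝ → ℝ) (hconv : ConvexOn ℝ Set.univ h) (α : ℝ) (hα : 0 ≤ α)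
    (hyp : ∀ ε > (0 : ℝ), ∃ C > (0 : ℝ), ∀ t < (0 : ℝ),
      (α + ε) * t + h t ≤ h 0 + Real.log C) :
    ∀ t s : ℝ, t ≤ s → h t + α * t ≤ h s + α * s := by
  intro t s hts
  by_contra hlt
  push_neg at hlt
  rcases eq_or_lt_of_le hts with rfl | hts'
  · exact lt_irrefl _ hlt
  set g : ℝ → ℝ := fun x => h x + α * x with hg
  have gconv : ConvexOn ℝ Set.univ g := by
    have hid : ConvexOn ℝ Set.univ (fun x : ℝ => α * x) := by
      have := (convexOn_id (convex_univ : Convex ℝ (Set.univ : Set ℝ))).smul hα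
      simpa [smul_eq_mul, Function.comp] using this
    exact hconv.add hid
  have hgts : g s < g t := hlt
  set δ : ℝ := (g t - g s) / (s - t) with hδdef
  have hst : (0:ℝ) < s - t := sub_pos.mpr hts'
  have hδ : 0 < δ := div_pos (sub_pos.mpr hgts) hst
  obtain ⟨C, hC, hbound⟩ := hyp (δ / 2) (half_pos hδ)
  -- key slope fact: for u < t, g u ≥ g t + δ * (t - u)
  have key : ∀ u : ℝ, u < t → g t + δ * t - δ * u ≤ g u := by
    intro u hu
    have hslope := gconv.slope_mono_adjacent (Set.mem_univ u) (Set.mem_univ s) hu hts'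
    have htu : (0:ℝ) < t - u := sub_pos.mpr hu
    rw [div_le_div_iff₀ htu hst] at hslope
    have hδeq : δ * (s - t) = g t - g s := by
      rw [hδdef, div_mul_cancel₀ _ hst.ne']
    nlinarith [hslope, hδeq, mul_pos hδ htu, mul_pos hst htu]
  set M : ℝ := (g t + δ * t - h 0 - Real.log C) / (δ / 2) with hM
  set u : ℝ := min t (min 0 M) - 1 with hu
  have hut : u < t := by
    have : u ≤ t - 1 := by
      have := min_le_left t (min 0 M)
      linarith [this]
    linarith
  have hu0 : u < 0 := by
    have h1 : min t (min 0 M) ≤ 0 := le_trans (min_le_right _ _) (min_le_left _ _)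
    linarith
  have huM : u < M := by
    have h1 : min t (min 0 M) ≤ M := le_trans (min_le_right _ _) (min_le_right _ _)
    linarith
  have hbu := hbound u hu0
  have hkey := key u hut
  -- from u < M : u * (δ/2) < g t + δ * t - h 0 - log C
  have hmul : δ * u / 2 < g t + δ * t - h 0 - Real.log C := by
    have := (lt_div_iff₀ (half_pos hδ)).mp huM
    linarith [this, (by ring : u * (δ / 2) = δ * u / 2)]
  -- (α + δ/2) * u + h u = g u + (δ/2) * u
  have hexp : (α + δ / 2) * u + h u = g u + δ * u / 2 := by
    simp only [hg]; ring
  rw [hexp] at hbu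
  clear_value g δ M u
  linarith [hkey, hmul, hbu]
end
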